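/- arXiv:1502.04776 — 2 statements merged into one kernel-verified Lean document; each statement's English description precedes it below -/
import Mathlib

section
/- In ZM(m,n,r), if the subgroup H_{(m₁,n₁,s)} = ⟨a^{m₁}, b^{n₁}a^{s}⟩ (with m₁ | m, n₁ | n, 0 ≤ s < m₁, and m₁ | s·(r^n−1)/(r^{n₁}−1)) is normal in ZM(m,n,r), then s = 0 and m₁ divides r^{n₁} − 1. -/
def ZMrels (m n : ℕ) (r : ℤ) : Set (FreeGroup Bool) :=
  {FreeGroup.of true ^ m, FreeGroup.of false ^ n,
   (FreeGroup.of false)⁻¹ * FreeGroup.of true * FreeGroup.of false * (FreeGroup.of true) ^ (-r)}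

abbrev ZM (m n : ℕ) (r : ℤ) : Type := PresentedGroup (ZMrels m n r)

def ZMa (m n : ℕ) (r : ℤ) : ZM m n r := PresentedGroup.of true

def ZMb (m n : ℕ) (r : ℤ) : ZM m n r := PresentedGroup.of false

/-!
Map `ZM m n r` to `ZMod m₁ ⋊ ZMod n`, where the generator of `ZMod n` acts by multiplication
by `r`. The image of `H` lies in the cyclic group generated by the image `g` of
`(b ^ n₁ * a ^ s)⁻¹`. The divisibility hypothesis on `s` says exactly that `g` has the same
order `n / n₁` as its projection to `ZMod n`, so `⟨g⟩` meets the normal factor `ZMod m₁`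
trivially. Normality of `H` puts the commutators of `g` with the images of `a` and `b` into
`⟨g⟩ ∩ ZMod m₁`, so they vanish; written out in coordinates, this says `r ^ n₁ = 1` and
`r * s = s` in `ZMod m₁`, and `r - 1` is a unit there.
-/

open Multiplicative SemidirectProduct

lemma eq_one_of_mem_zpowers_of_map_eq_one {G Q : Type*} [Group G] [Group Q] (π : G →* Q)
    {g x : G} (hg : g ^ orderOf (π g) = 1) (hx : x ∈ Subgroup.zpowers g) (hπx : π x = 1) :
    x = 1 := by
  obtain ⟨j, rfl⟩ := hx
  rw [map_zpow, ← orderOf_dvd_iff_zpow_eq_one] at hπx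
  obtain ⟨t, rfl⟩ := hπx
  show g ^ _ = 1
  rw [zpow_mul, zpow_natCast, hg, one_zpow]

lemma Subgroup.Normal.commute_of_le_comap_zpowers {G P Q : Type*} [Group G] [Group P]
    [CommGroup Q] {H : Subgroup G} (hH : H.Normal) (F : G →* P) (π : P →* Q) {g : P}
    (hg : g ^ orderOf (π g) = 1) (hHg : H ≤ (Subgroup.zpowers g).comap F) {h : G} (hh : h ∈ H)
    (x : G) : Commute (F x) (F h) := by
  have hc : x * h * x⁻¹ * h⁻¹ ∈ H := mul_mem (hH.conj_mem h hh x) (inv_mem hh)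
  have := eq_one_of_mem_zpowers_of_map_eq_one π hg (hHg hc) (by simp [mul_comm (π (F x))])
  simp only [map_mul, map_inv, mul_inv_eq_iff_eq_mul, one_mul] at this
  exact this

lemma ZMod.intCast_pow_eq_one_iff {m k : ℕ} {r : ℤ} :
    (r : ZMod m) ^ k = 1 ↔ (m : ℤ) ∣ r ^ k - 1 := by
  rw [← ZMod.intCast_zmod_eq_zero_iff_dvd, Int.cast_sub, Int.cast_pow, Int.cast_one, sub_eq_zero]

lemma ZMod.exists_unit_eq_intCast {m n : ℕ} {r : ℤ} (hn : n ≠ 0) (h : (m : ℤ) ∣ r ^ n - 1) :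
    ∃ u : (ZMod m)ˣ, (u : ZMod m) = r ∧ u ^ n = 1 := by
  have hrn := ZMod.intCast_pow_eq_one_iff.mpr h
  exact ⟨(IsUnit.of_pow_eq_one hrn hn).unit, rfl, Units.ext (by simpa using hrn)⟩

lemma ZMod.eq_zero_of_intCast_mul_eq_self {m : ℕ} {r : ℤ} (hco : IsCoprime (m : ℤ) (r - 1))
    {x : ZMod m} (h : (r : ZMod m) * x = x) : x = 0 := by
  obtain ⟨a, b, hab⟩ := hco
  have hb : (b : ZMod m) * ((r : ZMod m) - 1) = 1 := by
    simpa using congrArg (Int.cast : ℤ → ZMod m) hab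
  linear_combination (-x) * hb + (b : ZMod m) * h

namespace SemidirectProduct

lemma inl_mul_inr_pow {N G : Type*} [CommGroup N] [Group G] {φ : G →* MulAut N} (x : N) (y : G)
    (k : ℕ) :
    (inl x * inr y : N ⋊[φ] G) ^ k = inl (∏ i ∈ Finset.range k, φ (y ^ i) x) * inr (y ^ k) := by
  induction k with
  | zero => simp
  | succ k ih =>
    rw [pow_succ, ih]
    ext <;> simp [Finset.prod_range_succ, pow_succ, -map_pow]

lemma commute_inl_inl_mul_inr_iff {N G : Type*} [CommGroup N] [Group G] {φ : G →* MulAut N}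
    (x x' : N) (y : G) : Commute (inl x : N ⋊[φ] G) (inl x' * inr y) ↔ φ y x = x := by
  rw [commute_iff_eq, SemidirectProduct.ext_iff]
  simp [mul_comm x, eq_comm]

lemma commute_inr_inl_mul_inr_iff {N G : Type*} [Group N] [CommGroup G] {φ : G →* MulAut N}
    (c : G) (x : N) (y : G) : Commute (inr c : N ⋊[φ] G) (inl x * inr y) ↔ φ c x = x := by
  rw [commute_iff_eq, SemidirectProduct.ext_iff]
  simp [mul_comm c]

end SemidirectProduct

def zmodPowHom {M : Type*} [Group M] {n : ℕ} (u : M) (hu : u ^ n = 1) :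
    Multiplicative (ZMod n) →* M :=
  AddMonoidHom.toMultiplicativeLeft
    (ZMod.lift n ⟨zmultiplesHom (Additive M) (Additive.ofMul u), by simp [← ofMul_pow, hu]⟩)

@[simp] lemma zmodPowHom_ofAdd_natCast {M : Type*} [Group M] {n : ℕ} (u : M) (hu : u ^ n = 1)
    (k : ℕ) : zmodPowHom u hu (ofAdd (k : ZMod n)) = u ^ k := by
  rw [← Int.cast_natCast]
  simp [zmodPowHom, -Int.cast_natCast]

def unitsPowAut {R : Type*} [Ring R] {n : ℕ} (u : Rˣ) (hu : u ^ n = 1) :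
    Multiplicative (ZMod n) →* MulAut (Multiplicative R) :=
  ((MulAutMultiplicative R).symm.toMonoidHom.comp AddAut.mulLeft).comp (zmodPowHom u hu)

@[simp] lemma unitsPowAut_apply {R : Type*} [Ring R] {n : ℕ} (u : Rˣ) (hu : u ^ n = 1)
    (k : ℕ) (x : R) :
    unitsPowAut u hu (ofAdd (k : ZMod n)) (ofAdd x) = ofAdd ((u : R) ^ k * x) := by
  rw [unitsPowAut, MonoidHom.comp_apply, zmodPowHom_ofAdd_natCast, ← Units.val_pow_eq_pow_val]
  rfl

namespace ZM

variable {m n : ℕ} {r : ℤ} {G : Type*} [Group G]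

def lift (x y : G) (hx : x ^ m = 1) (hy : y ^ n = 1) (hxy : y⁻¹ * x * y = x ^ r) :
    ZM m n r →* G :=
  PresentedGroup.toGroup (f := fun i => cond i x y) <| by
    rintro ρ (rfl | rfl | rfl) <;> simp [hx, hy, hxy]

variable {x y : G} {hx : x ^ m = 1} {hy : y ^ n = 1} {hxy : y⁻¹ * x * y = x ^ r}

@[simp] lemma lift_ZMa : lift x y hx hy hxy (ZMa m n r) = x := PresentedGroup.toGroup.of _

@[simp] lemma lift_ZMb : lift x y hx hy hxy (ZMb m n r) = y := PresentedGroup.toGroup.of _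

end ZM

section UnitsPowAut

variable {R : Type*} [Ring R] {n : ℕ} (u : Rˣ) (hu : u ^ n = 1)

lemma unitsPowAut_inl_mul_inr_pow (x : R) (k j : ℕ) :
    (inl (ofAdd x) * inr (ofAdd (k : ZMod n)) :
      Multiplicative R ⋊[unitsPowAut u hu] Multiplicative (ZMod n)) ^ j =
    inl (ofAdd ((∑ i ∈ Finset.range j, (u : R) ^ (k * i)) * x)) *
      inr (ofAdd ((j * k : ℕ) : ZMod n)) := by
  have hpow (i : ℕ) : (ofAdd (k : ZMod n)) ^ i = ofAdd ((i * k : ℕ) : ZMod n) := by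
    rw [← ofAdd_nsmul, nsmul_eq_mul, Nat.cast_mul]
  rw [inl_mul_inr_pow, Finset.sum_mul, ofAdd_sum, hpow]
  simp only [hpow, unitsPowAut_apply, mul_comm k]

lemma unitsPowAut_inl_mul_inr_pow_orderOf (hn : n ≠ 0) (x : R) {k : ℕ} (hk : k ∣ n)
    (hx : (∑ i ∈ Finset.range (n / k), (u : R) ^ (k * i)) * x = 0) :
    (inl (ofAdd x) * inr (ofAdd (k : ZMod n)) :
      Multiplicative R ⋊[unitsPowAut u hu] Multiplicative (ZMod n)) ^
      orderOf (rightHom (inl (ofAdd x) * inr (ofAdd (k : ZMod n)) :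
        Multiplicative R ⋊[unitsPowAut u hu] Multiplicative (ZMod n))) = 1 := by
  have hord : orderOf (ofAdd (k : ZMod n)) = n / k := by
    rw [orderOf_ofAdd_eq_addOrderOf, ZMod.addOrderOf_coe _ hn, Nat.gcd_eq_right hk]
  rw [map_mul, rightHom_inl, rightHom_inr, one_mul, hord, unitsPowAut_inl_mul_inr_pow, hx,
    Nat.div_mul_cancel hk, ZMod.natCast_self]
  simp

lemma commute_inl_ofAdd_one_iff (x : R) (k : ℕ) :
    Commute (inl (ofAdd 1) : Multiplicative R ⋊[unitsPowAut u hu] Multiplicative (ZMod n))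
      (inl (ofAdd x) * inr (ofAdd (k : ZMod n))) ↔ (u : R) ^ k = 1 := by
  rw [commute_inl_inl_mul_inr_iff, unitsPowAut_apply, mul_one, EmbeddingLike.apply_eq_iff_eq]

lemma commute_inr_ofAdd_one_iff (x : R) (y : Multiplicative (ZMod n)) :
    Commute (inr (ofAdd 1) : Multiplicative R ⋊[unitsPowAut u hu] Multiplicative (ZMod n))
      (inl (ofAdd x) * inr y) ↔ (u : R) * x = x := by
  rw [commute_inr_inl_mul_inr_iff, ← Nat.cast_one, unitsPowAut_apply, pow_one,
    EmbeddingLike.apply_eq_iff_eq]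

variable {m : ℕ} {r : ℤ}

/-- `b` goes to the inverse of the generator of `ZMod n`, so that `b⁻¹ a b` is `a` multiplied
by `u = r`. -/
def ZM.toSemidirectProduct (hm : (m : R) = 0) (hur : (u : R) = r) :
    ZM m n r →* Multiplicative R ⋊[unitsPowAut u hu] Multiplicative (ZMod n) :=
  ZM.lift (inl (ofAdd 1)) (inr (ofAdd 1))⁻¹
    (by rw [← map_pow, ← ofAdd_nsmul, nsmul_one, hm, ofAdd_zero, map_one])
    (by rw [inv_pow, ← map_pow, ← ofAdd_nsmul, nsmul_one, ZMod.natCast_self, ofAdd_zero, map_one,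
      inv_one])
    (by
      rw [inv_inv, ← map_inv, ← inl_aut, ← map_zpow, ← ofAdd_zsmul, zsmul_one, ← hur]
      congr 1
      simpa using unitsPowAut_apply u hu 1 1)

variable {u hu} {hm : (m : R) = 0} {hur : (u : R) = r}

@[simp] lemma ZM.toSemidirectProduct_ZMa :
    ZM.toSemidirectProduct u hu hm hur (ZMa m n r) = inl (ofAdd 1) := ZM.lift_ZMa

@[simp] lemma ZM.toSemidirectProduct_ZMb :
    ZM.toSemidirectProduct u hu hm hur (ZMb m n r) = (inr (ofAdd 1))⁻¹ := ZM.lift_ZMb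

@[simp] lemma ZM.toSemidirectProduct_ZMa_pow (k : ℕ) :
    ZM.toSemidirectProduct u hu hm hur (ZMa m n r ^ k) = inl (ofAdd (k : R)) := by
  rw [map_pow, ZM.toSemidirectProduct_ZMa, ← map_pow, ← ofAdd_nsmul, nsmul_one]

@[simp] lemma ZM.toSemidirectProduct_ZMb_pow (k : ℕ) :
    ZM.toSemidirectProduct u hu hm hur (ZMb m n r ^ k) = (inr (ofAdd (k : ZMod n)))⁻¹ := by
  rw [map_pow, ZM.toSemidirectProduct_ZMb, inv_pow, ← map_pow, ← ofAdd_nsmul, nsmul_one]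

end UnitsPowAut

theorem stmt4_general (m n : ℕ) (r : ℤ) (hn : 0 < n)
    (hco2 : IsCoprime (m : ℤ) (r - 1))
    (hr : (m : ℤ) ∣ r ^ n - 1)
    (m₁ n₁ s : ℕ) (hm1 : m₁ ∣ m) (hn1 : n₁ ∣ n) (hs : s < m₁)
    (hL : (m₁ : ℤ) ∣ (s : ℤ) * ∑ i ∈ Finset.range (n / n₁), r ^ (n₁ * i))
    (hN : (Subgroup.closure {ZMa m n r ^ m₁, ZMb m n r ^ n₁ * ZMa m n r ^ s} :
      Subgroup (ZM m n r)).Normal) :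
    s = 0 ∧ (m₁ : ℤ) ∣ r ^ n₁ - 1 := by
  obtain ⟨u, hur, hu⟩ :=
    ZMod.exists_unit_eq_intCast hn.ne' ((Int.natCast_dvd_natCast.mpr hm1).trans hr)
  set F := ZM.toSemidirectProduct u hu ((ZMod.natCast_eq_zero_iff m m₁).mpr hm1) hur
  set g : Multiplicative (ZMod m₁) ⋊[unitsPowAut u hu] Multiplicative (ZMod n) :=
    inl (ofAdd (-(s : ZMod m₁))) * inr (ofAdd (n₁ : ZMod n))
  have hFh : F (ZMb m n r ^ n₁ * ZMa m n r ^ s) = g⁻¹ := by simp [F, g]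
  have hg : g ^ orderOf (rightHom g) = 1 := by
    refine unitsPowAut_inl_mul_inr_pow_orderOf u hu hn.ne' _ hn1 ?_
    have := (ZMod.intCast_zmod_eq_zero_iff_dvd _ m₁).mpr hL
    push_cast at this
    rw [hur]
    linear_combination -this
  have hHg : Subgroup.closure {ZMa m n r ^ m₁, ZMb m n r ^ n₁ * ZMa m n r ^ s} ≤
      (Subgroup.zpowers g).comap F := by
    rw [Subgroup.closure_le, Set.insert_subset_iff, Set.singleton_subset_iff]
    exact ⟨by simp [F], by simp [hFh]⟩
  have hcomm (x : ZM m n r) : Commute (F x) g := by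
    simpa [hFh] using hN.commute_of_le_comap_zpowers F rightHom hg hHg
      (Subgroup.subset_closure (Set.mem_insert_of_mem _ rfl)) x
  have hrn₁ : (u : ZMod m₁) ^ n₁ = 1 :=
    (commute_inl_ofAdd_one_iff u hu _ _).mp (by simpa [F] using hcomm (ZMa m n r))
  have hrs : (r : ZMod m₁) * s = s := by
    have := (commute_inr_ofAdd_one_iff u hu _ _).mp
      (by simpa [F] using (hcomm (ZMb m n r)).inv_left)
    rw [hur, mul_neg, neg_inj] at this
    exact this
  have hs0 := ZMod.eq_zero_of_intCast_mul_eq_self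
    (hco2.of_isCoprime_of_dvd_left (Int.natCast_dvd_natCast.mpr hm1)) hrs
  refine ⟨Nat.eq_zero_of_dvd_of_lt ((ZMod.natCast_eq_zero_iff s m₁).mp hs0) hs, ?_⟩
  exact ZMod.intCast_pow_eq_one_iff.mp (hur ▸ hrn₁)

theorem stmt4 (m n : ℕ) (r : ℤ) (hm : 0 < m) (hn : 0 < n)
    (hco : Nat.Coprime m n) (hco2 : IsCoprime (m : ℤ) (r - 1))
    (hr : (m : ℤ) ∣ r ^ n - 1)
    (m₁ n₁ s : ℕ) (hm1 : m₁ ∣ m) (hn1 : n₁ ∣ n) (hs : s < m₁)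
    (hL : (m₁ : ℤ) ∣ (s : ℤ) * ∑ i ∈ Finset.range (n / n₁), r ^ (n₁ * i))
    (hN : (Subgroup.closure {ZMa m n r ^ m₁, ZMb m n r ^ n₁ * ZMa m n r ^ s} :
      Subgroup (ZM m n r)).Normal) :
    s = 0 ∧ (m₁ : ℤ) ∣ r ^ n₁ - 1 :=
  stmt4_general m n r hn hco2 hr m₁ n₁ s hm1 hn1 hs hL hN
end

section
/- Every normal subgroup of ZM(m,n,r) is characteristic. -/
/-!
Write `A = ⟨a⟩` and `B = ⟨b⟩`. Since `b⁻¹ a b = a ^ r`, we get `a ^ (r - 1) = ⁅a⁻¹, b⁻¹⁆`, and as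
`r - 1` is prime to `m` this puts `A` in the commutator subgroup; conversely `A` is normal with
cyclic quotient, so `A` is the commutator subgroup and hence characteristic. Every element is `x y`
with `x ∈ A`, `y ∈ B`, and conjugation by `b` turns `x y` into `x ^ r y`, so a normal subgroup
containing `x y` contains `x ^ (r - 1)`, hence `x` and `y`. An automorphism `φ` acts on `A` as a
power map `x ↦ x ^ k` and on `G ⧸ A` as a power map `y ↦ y ^ l`; for `x y ∈ H` normal this gives
`φ x = x ^ k ∈ H` and `φ y = z y ^ l` with `z ∈ A ∩ φ H = φ (A ∩ H)`, so `z = φ w = w ^ k ∈ H`.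
-/

section General

open Subgroup
open scoped commutatorElement

variable {G : Type*} [Group G]

theorem Subgroup.mem_of_zpow_mem_of_isCoprime (S : Subgroup G) {x : G} {m : ℕ} {c : ℤ}
    (hx : x ^ m = 1) (hc : IsCoprime (m : ℤ) c) (h : x ^ c ∈ S) : x ∈ S := by
  obtain ⟨u, v, huv⟩ := hc
  have hx' : x = (x ^ c) ^ v := by
    calc x = x ^ (u * m + v * c) := by rw [huv, zpow_one]
      _ = (x ^ (m : ℤ)) ^ u * (x ^ c) ^ v := by
        rw [zpow_add, mul_comm u, mul_comm v, zpow_mul, zpow_mul]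
      _ = (x ^ c) ^ v := by rw [zpow_natCast, hx, one_zpow, one_mul]
  rw [hx']
  exact S.zpow_mem h v

theorem conj_eq_zpow_of_mem_zpowers {a b x : G} {r : ℤ} (hab : b⁻¹ * a * b = a ^ r)
    (hx : x ∈ zpowers a) : b⁻¹ * x * b = x ^ r := by
  obtain ⟨s, rfl⟩ := mem_zpowers_iff.mp hx
  have := conj_zpow (a := b⁻¹) (b := a) (i := s)
  rw [inv_inv] at this
  rw [← this, hab, ← zpow_mul, ← zpow_mul, mul_comm]

theorem Subgroup.Normal.mem_of_mul_mem_of_conj_eq_zpow {N : Subgroup G} (hN : N.Normal)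
    {a b : G} {m : ℕ} {r : ℤ} (hab : b⁻¹ * a * b = a ^ r)
    (ha : a ^ m = 1) (hmr : IsCoprime (m : ℤ) (r - 1))
    {x y : G} (hx : x ∈ zpowers a) (hy : y ∈ zpowers b) (hxy : x * y ∈ N) : x ∈ N := by
  have hconj : b⁻¹ * (x * y) * b = x ^ r * y := by
    obtain ⟨j, rfl⟩ := mem_zpowers_iff.mp hy
    rw [← conj_eq_zpow_of_mem_zpowers hab hx]
    group
  have hxr : x ^ (r - 1) ∈ N := by
    have := N.mul_mem (hN.conj_mem _ hxy b⁻¹) (N.inv_mem hxy)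
    rwa [inv_inv, hconj, mul_inv_rev, mul_assoc, mul_inv_cancel_left, ← zpow_neg_one,
      ← zpow_add, ← sub_eq_add_neg] at this
  obtain ⟨i, rfl⟩ := mem_zpowers_iff.mp hx
  refine N.mem_of_zpow_mem_of_isCoprime (m := m) ?_ hmr hxr
  rw [← zpow_natCast, ← zpow_mul, mul_comm, zpow_mul, zpow_natCast, ha, one_zpow]

theorem zpowers_le_commutator_of_conj_eq_zpow {a b : G} {m : ℕ} {r : ℤ}
    (hab : b⁻¹ * a * b = a ^ r) (ha : a ^ m = 1) (hmr : IsCoprime (m : ℤ) (r - 1)) :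
    zpowers a ≤ commutator G := by
  rw [zpowers_le]
  refine (commutator G).mem_of_zpow_mem_of_isCoprime ha hmr ?_
  have hcomm : a ^ (r - 1) = ⁅a⁻¹, b⁻¹⁆ := by
    rw [commutatorElement_def, inv_inv, inv_inv, mul_assoc, mul_assoc, ← mul_assoc b⁻¹, hab,
      sub_eq_neg_add, zpow_add, zpow_neg_one]
  rw [hcomm, _root_.commutator_def]
  exact commutator_mem_commutator (mem_top _) (mem_top _)

theorem Subgroup.mem_normalizer_of_conj_mem_of_pow_eq_one {H : Subgroup G} {g : G} {n : ℕ}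
    (hn : 0 < n) (hg : g ^ n = 1) (hH : ∀ x ∈ H, g⁻¹ * x * g ∈ H) :
    g ∈ normalizer (H : Set G) := by
  have hpow : ∀ k : ℕ, ∀ x ∈ H, (g ^ k)⁻¹ * x * g ^ k ∈ H := by
    intro k
    induction k with
    | zero => simp
    | succ k ih =>
      intro x hx
      simpa only [pow_succ, mul_inv_rev, mul_assoc] using hH _ (ih x hx)
  have hinv : g ^ (n - 1) = g⁻¹ :=
    eq_inv_of_mul_eq_one_left (by rw [← pow_succ, Nat.sub_add_cancel hn, hg])
  rw [mem_normalizer_iff'']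
  refine fun x ↦ ⟨hH x, fun hx ↦ ?_⟩
  simpa only [hinv, inv_inv, mul_assoc, mul_inv_cancel, mul_one, mul_inv_cancel_left]
    using hpow (n - 1) _ hx

section Quotient

variable {A : Subgroup G} [A.Normal] {b : G}

theorem zpowers_mk_eq_top_of_sup_eq_top (hgen : A ⊔ zpowers b = ⊤) :
    zpowers (b : G ⧸ A) = ⊤ := by
  rw [← MonoidHom.range_eq_top.mpr (QuotientGroup.mk'_surjective A), MonoidHom.range_eq_map,
    ← hgen, Subgroup.map_sup, QuotientGroup.map_mk'_self, bot_sup_eq, MonoidHom.map_zpowers]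
  rfl

theorem commutator_le_of_sup_zpowers_eq_top (hgen : A ⊔ zpowers b = ⊤) :
    commutator G ≤ A := by
  have hcyc := zpowers_mk_eq_top_of_sup_eq_top hgen
  rw [commutator_def, commutator_le]
  intro g _ h _
  obtain ⟨i, hi⟩ := mem_zpowers_iff.mp (hcyc ▸ mem_top (g : G ⧸ A))
  obtain ⟨j, hj⟩ := mem_zpowers_iff.mp (hcyc ▸ mem_top (h : G ⧸ A))
  rw [← QuotientGroup.eq_one_iff, ← QuotientGroup.mk'_apply, map_commutatorElement,
    QuotientGroup.mk'_apply, QuotientGroup.mk'_apply, ← hi, ← hj,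
    commutatorElement_eq_one_iff_commute]
  exact (Commute.refl _).zpow_zpow i j

theorem exists_zpow_div_mem_of_sup_eq_top (hgen : A ⊔ zpowers b = ⊤) (φ : G →* G) :
    ∃ k : ℤ, ∀ y ∈ zpowers b, φ y / y ^ k ∈ A := by
  obtain ⟨k, hk⟩ := mem_zpowers_iff.mp
    (zpowers_mk_eq_top_of_sup_eq_top hgen ▸ mem_top (φ b : G ⧸ A))
  refine ⟨k, fun y hy ↦ ?_⟩
  obtain ⟨j, rfl⟩ := mem_zpowers_iff.mp hy
  rw [← QuotientGroup.eq_iff_div_mem, map_zpow, QuotientGroup.mk_zpow, ← hk,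
    QuotientGroup.mk_zpow, QuotientGroup.mk_zpow, ← zpow_mul, ← zpow_mul, mul_comm]

end Quotient

theorem exists_zpow_eq_of_map_mem_zpowers (φ : G →* G) {a : G} (ha : φ a ∈ zpowers a) :
    ∃ k : ℤ, ∀ x ∈ zpowers a, φ x = x ^ k := by
  obtain ⟨k, hk⟩ := mem_zpowers_iff.mp ha
  refine ⟨k, fun x hx ↦ ?_⟩
  obtain ⟨i, rfl⟩ := mem_zpowers_iff.mp hx
  rw [map_zpow, ← hk, ← zpow_mul, ← zpow_mul, mul_comm]

theorem Subgroup.Normal.characteristic_of_mul_mem_imp_mem {a b : G}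
    [hA : (zpowers a).Characteristic] (hgen : zpowers a ⊔ zpowers b = ⊤)
    (hsplit : ∀ N : Subgroup G, N.Normal →
      ∀ x ∈ zpowers a, ∀ y ∈ zpowers b, x * y ∈ N → x ∈ N)
    {H : Subgroup G} (hH : H.Normal) : H.Characteristic := by
  rw [characteristic_iff_map_le]
  rintro φ _ ⟨g, hg, rfl⟩
  obtain ⟨x, hxA, y, hyB, rfl⟩ := mem_sup_of_normal_left.mp (hgen ▸ mem_top g)
  have hxH := hsplit H hH x hxA y hyB hg
  have hyH : y ∈ H := by simpa using H.mul_mem (H.inv_mem hxH) hg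
  have hAφ : ∀ z, φ z ∈ zpowers a ↔ z ∈ zpowers a := fun z ↦
    SetLike.ext_iff.mp (characteristic_iff_comap_eq.mp hA φ) z
  obtain ⟨k, hk⟩ := exists_zpow_eq_of_map_mem_zpowers φ.toMonoidHom
    ((hAφ a).mpr (mem_zpowers a))
  obtain ⟨l, hl⟩ := exists_zpow_div_mem_of_sup_eq_top hgen φ.toMonoidHom
  -- `φ y = z * y ^ l` with `z ∈ ⟨a⟩`; splitting `φ y` in the normal subgroup `φ H` puts `z` there,
  -- and since `⟨a⟩` is characteristic, `z = φ w` with `w ∈ H ⊓ ⟨a⟩`.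
  obtain ⟨w, hwH, hw⟩ : φ y / y ^ l ∈ H.map φ.toMonoidHom := by
    refine hsplit _ (hH.map _ φ.surjective) _ (hl y hyB) _ ((zpowers b).zpow_mem hyB l) ?_
    simpa using mem_map_of_mem φ.toMonoidHom hyH
  have hwA : w ∈ zpowers a := (hAφ w).mp (hw ▸ hl y hyB)
  have hφy : φ.toMonoidHom y = w ^ k * y ^ l := by
    rw [← hk w hwA, hw, div_mul_cancel]; rfl
  rw [map_mul, hk x hxA, hφy]
  exact H.mul_mem (H.zpow_mem hxH k) (H.mul_mem (H.zpow_mem hwH k) (H.zpow_mem hyH l))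

end General

namespace ZM

open Subgroup

variable {m n : ℕ} {r : ℤ}

theorem ZMa_pow_eq_one : ZMa m n r ^ m = 1 := by
  have h := PresentedGroup.one_of_mem (rels := ZMrels m n r) (x := FreeGroup.of true ^ m)
    (by simp [ZMrels])
  rwa [map_pow] at h

theorem ZMb_pow_eq_one : ZMb m n r ^ n = 1 := by
  have h := PresentedGroup.one_of_mem (rels := ZMrels m n r) (x := FreeGroup.of false ^ n)
    (by simp [ZMrels])
  rwa [map_pow] at h

theorem ZMb_inv_mul_ZMa_mul_ZMb : (ZMb m n r)⁻¹ * ZMa m n r * ZMb m n r = ZMa m n r ^ r := by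
  have h := PresentedGroup.one_of_mem (rels := ZMrels m n r)
    (x := (FreeGroup.of false)⁻¹ * FreeGroup.of true * FreeGroup.of false *
      (FreeGroup.of true) ^ (-r)) (by simp [ZMrels])
  simp only [map_mul, map_inv, map_zpow, zpow_neg] at h
  exact mul_inv_eq_one.mp h

theorem zpowers_ZMa_sup_zpowers_ZMb : zpowers (ZMa m n r) ⊔ zpowers (ZMb m n r) = ⊤ := by
  rw [eq_top_iff, ← PresentedGroup.closure_range_of (ZMrels m n r), closure_le]
  rintro _ ⟨_ | _, rfl⟩
  · exact mem_sup_right (mem_zpowers (ZMb m n r))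
  · exact mem_sup_left (mem_zpowers (ZMa m n r))

theorem zpowers_ZMa_normal (hn : 0 < n) : (zpowers (ZMa m n r)).Normal := by
  rw [← normalizer_eq_top_iff, eq_top_iff, ← PresentedGroup.closure_range_of (ZMrels m n r),
    closure_le]
  rintro _ ⟨_ | _, rfl⟩
  · refine mem_normalizer_of_conj_mem_of_pow_eq_one (g := ZMb m n r) hn ZMb_pow_eq_one
      fun x hx ↦ ?_
    rw [conj_eq_zpow_of_mem_zpowers ZMb_inv_mul_ZMa_mul_ZMb hx]
    exact zpow_mem hx r
  · exact le_normalizer (mem_zpowers (ZMa m n r))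

theorem commutator_eq_zpowers_ZMa (hn : 0 < n) (hmr : IsCoprime (m : ℤ) (r - 1)) :
    commutator (ZM m n r) = zpowers (ZMa m n r) := by
  have := zpowers_ZMa_normal (m := m) (r := r) hn
  exact le_antisymm (commutator_le_of_sup_zpowers_eq_top zpowers_ZMa_sup_zpowers_ZMb)
    (zpowers_le_commutator_of_conj_eq_zpow ZMb_inv_mul_ZMa_mul_ZMb ZMa_pow_eq_one hmr)

end ZM

theorem stmt6_general (m n : ℕ) (r : ℤ) (hn : 0 < n)
    (hco2 : IsCoprime (m : ℤ) (r - 1)) :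
    ∀ H : Subgroup (ZM m n r), H.Normal → H.Characteristic := by
  have : (Subgroup.zpowers (ZMa m n r)).Characteristic := by
    rw [← ZM.commutator_eq_zpowers_ZMa hn hco2]
    infer_instance
  exact fun H hH ↦ hH.characteristic_of_mul_mem_imp_mem ZM.zpowers_ZMa_sup_zpowers_ZMb
    fun N hN _ hx _ hy hxy ↦
      hN.mem_of_mul_mem_of_conj_eq_zpow ZM.ZMb_inv_mul_ZMa_mul_ZMb ZM.ZMa_pow_eq_one hco2 hx hy hxy

theorem stmt6 (m n : ℕ) (r : ℤ) (hm : 0 < m) (hn : 0 < n)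
    (hco : Nat.Coprime m n) (hco2 : IsCoprime (m : ℤ) (r - 1))
    (hr : (m : ℤ) ∣ r ^ n - 1) :
    ∀ H : Subgroup (ZM m n r), H.Normal → H.Characteristic :=
  stmt6_general m n r hn hco2
end
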